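/- Let n, m ≥ 3 and let M be the mn × mn (0,1)-matrix indexed by ZMod n × ZMod m whose ((i,j),(k,l))-entry is 1 exactly when (k,l) ∈ {(i,j), (i−1,j), (i,j−1), (i−1,j−1)} (the grid–face adjacency block of the Union Jack lattice UJL(n,m)). Then M·Mᵀ = (2·I_m + A(C_m)) ⊗ (2·I_n + A(C_n)), where A(C_n) denotes the adjacency matrix of the cycle C_n on ZMod n and ⊗ denotes the Kronecker product of matrices. -/

import Mathlib

/-!
Up to swapping the two coordinates, `M` is the Kronecker product `F_m ⊗ F_n` of the
vertex–edge incidence matrices of the cycles, so `M Mᵀ = (F_m F_mᵀ) ⊗ (F_n F_nᵀ)`.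
Writing `F = I + P` with `P` the permutation matrix of the shift `i ↦ i - 1` gives
`F Fᵀ = 2 I + P + Pᵀ`, and `P + Pᵀ` is the adjacency matrix of the cycle once `n ≥ 3`,
when the neighbours `i - 1`, `i + 1` are distinct from each other and from `i`.
-/

open scoped Classical
open Matrix Kronecker

noncomputable section

/-- Vertex set of the Union Jack lattice `UJL(n,m)`: the first summand consists of the
"grid vertices" of the `n × m` toroidal square lattice, the second summand of the
"face vertices" inserted in each face. -/
abbrev UJLVert (n m : ℕ) : Type := (ZMod n × ZMod m) ⊕ (ZMod n × ZMod m)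

/-- Base adjacency relation of the Union Jack lattice (to be symmetrized):
grid vertex `(i,j)` is related to the grid vertices `(i+1,j)` and `(i,j+1)`
(symmetrization yields all four grid neighbours `(i±1,j)`, `(i,j±1)`), and the
grid vertex `(i,j)` is related to the face vertices `(i,j)`, `(i-1,j)`, `(i,j-1)`,
`(i-1,j-1)`, i.e. the face vertex `(k,l)` is adjacent to the grid vertices
`(k,l)`, `(k+1,l)`, `(k,l+1)`, `(k+1,l+1)`. -/
def UJLRel (n m : ℕ) : UJLVert n m → UJLVert n m → Prop
  | Sum.inl p, Sum.inl q => (q.1 = p.1 + 1 ∧ q.2 = p.2) ∨ (q.1 = p.1 ∧ q.2 = p.2 + 1)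
  | Sum.inl p, Sum.inr q =>
      (q.1 = p.1 ∧ q.2 = p.2) ∨ (q.1 = p.1 - 1 ∧ q.2 = p.2) ∨
        (q.1 = p.1 ∧ q.2 = p.2 - 1) ∨ (q.1 = p.1 - 1 ∧ q.2 = p.2 - 1)
  | _, _ => False

/-- The Union Jack lattice `UJL(n,m)` with toroidal boundary condition. -/
def UJL (n m : ℕ) : SimpleGraph (UJLVert n m) := SimpleGraph.fromRel (UJLRel n m)

/-- `cos α_i` where `α_i = 2 π i / n`. -/
def cosα (n i : ℕ) : ℝ := Real.cos (2 * Real.pi * i / n)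

/-- The cycle `C_n` on `ZMod n`: `i` is adjacent to `i + 1` and `i - 1`. -/
def cycleGraph (n : ℕ) : SimpleGraph (ZMod n) := SimpleGraph.fromRel (fun i k => k = i + 1)

/-- The `mn × mn` (0,1)-matrix `M` recording the adjacency between the grid vertices and the
face vertices of `UJL(n,m)`: the `((i,j),(k,l))`-entry is `1` exactly when
`(k,l) ∈ {(i,j),(i−1,j),(i,j−1),(i−1,j−1)}`. -/
def Mmat (n m : ℕ) : Matrix (ZMod n × ZMod m) (ZMod n × ZMod m) ℝ :=
  Matrix.of fun p q =>
    if (q.1 = p.1 ∧ q.2 = p.2) ∨ (q.1 = p.1 - 1 ∧ q.2 = p.2) ∨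
        (q.1 = p.1 ∧ q.2 = p.2 - 1) ∨ (q.1 = p.1 - 1 ∧ q.2 = p.2 - 1) then (1 : ℝ) else 0

theorem one_add_permMatrix_mul_transpose {ι R : Type*} [DecidableEq ι] [Fintype ι] [Semiring R]
    (σ : Equiv.Perm ι) :
    (1 + σ.permMatrix R) * (1 + σ.permMatrix R)ᵀ =
      (2 : R) • (1 : Matrix ι ι R) + (σ.permMatrix R + (σ.permMatrix R)ᵀ) := by
  have hP : σ.permMatrix R * (σ.permMatrix R)ᵀ = 1 := by
    rw [transpose_permMatrix, ← permMatrix_mul, inv_mul_cancel, permMatrix_one]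
  rw [transpose_add, transpose_one, add_mul, mul_add, mul_add, hP, one_mul, one_mul, mul_one,
    two_smul]
  abel

theorem one_ne_zero_of_two_ne_zero {R : Type*} [AddMonoidWithOne R] (h2 : (2 : R) ≠ 0) :
    (1 : R) ≠ 0 :=
  fun h1 => h2 (by rw [← one_add_one_eq_two, h1, add_zero])

theorem ZMod.two_ne_zero_of_three_le {n : ℕ} (hn : 3 ≤ n) : (2 : ZMod n) ≠ 0 := by
  intro h
  have hdvd : n ∣ 2 := (ZMod.natCast_eq_zero_iff 2 n).1 (by exact_mod_cast h)
  have := Nat.le_of_dvd two_pos hdvd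
  omega

/-- Row `i` is a vertex of `C_n`, column `a` the edge `{a, a + 1}`. -/
def cycleIncidence (n : ℕ) (R : Type*) [Zero R] [One R] : Matrix (ZMod n) (ZMod n) R :=
  Matrix.of fun i a => if a = i ∨ a = i - 1 then 1 else 0

abbrev cycleShift (n : ℕ) (R : Type*) [Zero R] [One R] : Matrix (ZMod n) (ZMod n) R :=
  Equiv.Perm.permMatrix R (Equiv.subRight (1 : ZMod n))

theorem cycleShift_apply {n : ℕ} {R : Type*} [Zero R] [One R] (i a : ZMod n) :
    cycleShift n R i a = if a = i - 1 then 1 else 0 := by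
  simp [cycleShift, eq_comm]

theorem cycleIncidence_eq_one_add_cycleShift {n : ℕ} {R : Type*} [AddMonoidWithOne R]
    (h1 : (1 : ZMod n) ≠ 0) : cycleIncidence n R = 1 + cycleShift n R := by
  ext i a
  have : i - 1 ≠ i := by simpa using h1
  by_cases hi : a = i <;> by_cases hs : a = i - 1 <;> simp_all [cycleIncidence, one_apply, eq_comm]

theorem cycleGraph_adjMatrix {n : ℕ} {R : Type*} [AddMonoidWithOne R] (h2 : (2 : ZMod n) ≠ 0) :
    (cycleGraph n).adjMatrix R = cycleShift n R + (cycleShift n R)ᵀ := by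
  ext i k
  have h1 := one_ne_zero_of_two_ne_zero h2
  rw [SimpleGraph.adjMatrix_apply]
  simp only [cycleGraph, SimpleGraph.fromRel_adj, Matrix.add_apply,
    transpose_apply, cycleShift_apply, eq_sub_iff_add_eq]
  rcases eq_or_ne k (i + 1) with rfl | hk
  · have hne : i ≠ i + 1 := by simpa using h1
    have hne' : i + 1 + 1 ≠ i := by rwa [add_assoc, one_add_one_eq_two, Ne, add_eq_left]
    simp [hne, hne']
  rcases eq_or_ne i (k + 1) with rfl | hi
  · have hne : k + 1 ≠ k := by simpa using h1
    simp [hne, hk.symm]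
  · simp [hk, hi, eq_comm]

theorem cycleIncidence_mul_transpose {n : ℕ} [NeZero n] {R : Type*} [Semiring R]
    (h2 : (2 : ZMod n) ≠ 0) :
    cycleIncidence n R * (cycleIncidence n R)ᵀ =
      (2 : R) • (1 : Matrix (ZMod n) (ZMod n) R) + (cycleGraph n).adjMatrix R := by
  rw [cycleIncidence_eq_one_add_cycleShift (one_ne_zero_of_two_ne_zero h2), one_add_permMatrix_mul_transpose,
    cycleGraph_adjMatrix h2]

theorem Mmat_eq_kronecker (n m : ℕ) :
    Mmat n m = (cycleIncidence m ℝ ⊗ₖ cycleIncidence n ℝ).submatrix Prod.swap Prod.swap := by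
  ext p q
  simp only [Mmat, cycleIncidence, of_apply, submatrix_apply, kroneckerMap_apply, Prod.fst_swap,
    Prod.snd_swap, ite_zero_mul_ite_zero, mul_one]
  congr 1
  simp only [eq_iff_iff]
  tauto

/-- For `n, m ≥ 3`,
`M·Mᵀ = (2·I_m + A(C_m)) ⊗ (2·I_n + A(C_n))` (Kronecker product), under the canonical
identification of the index set `ZMod n × ZMod m` of `M` with the index set
`ZMod m × ZMod n` of the Kronecker product, given by swapping the two coordinates. -/
theorem MMt_eq_kronecker (n m : ℕ) (hn : 3 ≤ n) (hm : 3 ≤ m) :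
    haveI : NeZero n := ⟨by omega⟩
    haveI : NeZero m := ⟨by omega⟩
    Mmat n m * (Mmat n m)ᵀ =
      (((2 : ℝ) • (1 : Matrix (ZMod m) (ZMod m) ℝ) + (cycleGraph m).adjMatrix ℝ) ⊗ₖ
          ((2 : ℝ) • (1 : Matrix (ZMod n) (ZMod n) ℝ) + (cycleGraph n).adjMatrix ℝ)).submatrix
        Prod.swap Prod.swap := by
  have : NeZero n := ⟨by omega⟩
  have : NeZero m := ⟨by omega⟩
  rw [Mmat_eq_kronecker, transpose_submatrix, ← kroneckerMap_transpose, ← Equiv.coe_prodComm,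
    submatrix_mul_equiv, ← mul_kronecker_mul,
    cycleIncidence_mul_transpose (ZMod.two_ne_zero_of_three_le hn),
    cycleIncidence_mul_transpose (ZMod.two_ne_zero_of_three_le hm), Equiv.coe_prodComm]
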